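/- arXiv:0802.3800 — 2 statements merged into one kernel-verified Lean document; each statement's English description precedes it below -/
import Mathlib

section
/- Let S and T be a Moufang–Mal'tsev pair, i.e. linear maps from M into L satisfying the generalized Maurer–Cartan equations, and let P := −S − T and Y(x;y) := (1/6)([S_x,S_y] + [T_x,T_y] + [P_x,P_y]). Then for all x, y in M one has [T_x, T_y] = 2·Y(x;y) − (2/3)·S_{[x,y]} − (1/3)·T_{[x,y]}. -/
/-!
Swapping `x` and `y` in the `T`–`T` equation and using `[S_x,T_y] = [T_x,S_y]` shows that
`T ∘ [·,·]` is skew, so `[T_x,T_y] = -T_{[x,y]} - 2[S_x,T_y]`. Expanding `[P_x,P_y]` and eliminating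
`[S_x,T_y]` with this relation gives `6 Y(x;y) = 2 S_{[x,y]} + 3 [T_x,T_y] + T_{[x,y]}`.
-/

structure IsMoufangMaltsevPair {k M L : Type*} [CommRing k] [AddCommGroup M] [Module k M]
    [LieRing L] [LieAlgebra k L] (br : M →ₗ[k] M →ₗ[k] M) (S T : M →ₗ[k] L) : Prop where
  lie_S_S : ∀ x y, ⁅S x, S y⁆ = S (br x y) - 2 • ⁅S x, T y⁆
  lie_T_T : ∀ x y, ⁅T x, T y⁆ = T (br y x) - 2 • ⁅T x, S y⁆
  lie_S_T_comm : ∀ x y, ⁅S x, T y⁆ = ⁅T x, S y⁆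

namespace IsMoufangMaltsevPair

variable {k M L : Type*} [CommRing k] [AddCommGroup M] [Module k M] [LieRing L] [LieAlgebra k L]
  {br : M →ₗ[k] M →ₗ[k] M} {S T : M →ₗ[k] L}

theorem T_br_swap (h : IsMoufangMaltsevPair br S T) (x y : M) :
    T (br y x) = -T (br x y) := by
  have hskew : ⁅T y, T x⁆ = -⁅T x, T y⁆ := (lie_skew _ _).symm
  have hskew' : ⁅T y, S x⁆ = -⁅T x, S y⁆ := by rw [← h.lie_S_T_comm y x, ← lie_skew]
  linear_combination (norm := module) -h.lie_T_T x y - h.lie_T_T y x + hskew + 2 • hskew'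

theorem lie_T_T_eq (h : IsMoufangMaltsevPair br S T) (x y : M) :
    ⁅T x, T y⁆ = -T (br x y) - 2 • ⁅S x, T y⁆ := by
  rw [h.lie_T_T, h.T_br_swap, h.lie_S_T_comm]

theorem lie_neg_sub_neg_sub (h : IsMoufangMaltsevPair br S T) (x y : M) :
    ⁅(-S - T) x, (-S - T) y⁆ = ⁅S x, S y⁆ + ⁅T x, T y⁆ + 2 • ⁅S x, T y⁆ := by
  simp only [LinearMap.sub_apply, LinearMap.neg_apply, sub_lie, lie_sub, neg_lie, lie_neg,
    two_smul, h.lie_S_T_comm x y]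
  abel

theorem yamagutian_sum_eq (h : IsMoufangMaltsevPair br S T) (x y : M) :
    ⁅S x, S y⁆ + ⁅T x, T y⁆ + ⁅(-S - T) x, (-S - T) y⁆
      = 2 • S (br x y) + 3 • ⁅T x, T y⁆ + T (br x y) := by
  rw [h.lie_neg_sub_neg_sub, h.lie_S_S, h.lie_T_T_eq]
  abel

end IsMoufangMaltsevPair

/-- For a Moufang–Mal'tsev pair (S, T), with P := -S - T and
Yamagutian Y, one has [Tx, Ty] = 2·Y(x;y) - (2/3)·S[x,y] - (1/3)·T[x,y]. -/
theorem stmt_2 {k : Type*} [Field k] [CharZero k]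
    {M L : Type*} [AddCommGroup M] [Module k M] [LieRing L] [LieAlgebra k L]
    (br : M →ₗ[k] M →ₗ[k] M) (S T : M →ₗ[k] L)
    (hSS : ∀ x y : M, ⁅S x, S y⁆ = S (br x y) - 2 • ⁅S x, T y⁆)
    (hTT : ∀ x y : M, ⁅T x, T y⁆ = T (br y x) - 2 • ⁅T x, S y⁆)
    (hST : ∀ x y : M, ⁅S x, T y⁆ = ⁅T x, S y⁆)
    (P : M →ₗ[k] L) (hP : P = -S - T)
    (Y : M → M → L)
    (hY : ∀ x y : M, Y x y = (1/6 : k) • (⁅S x, S y⁆ + ⁅T x, T y⁆ + ⁅P x, P y⁆)) :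
    ∀ x y : M, ⁅T x, T y⁆ =
      2 • Y x y - (2/3 : k) • S (br x y) - (1/3 : k) • T (br x y) := by
  intro x y
  have hpair : IsMoufangMaltsevPair br S T := ⟨hSS, hTT, hST⟩
  rw [hY, hP, hpair.yamagutian_sum_eq]
  module
end

section
/- Let S and T be a Moufang–Mal'tsev pair, i.e. linear maps from M into L satisfying the generalized Maurer–Cartan equations, let P := −S − T, Y(x;y) := (1/6)([S_x,S_y] + [T_x,T_y] + [P_x,P_y]), and define the triality conjugated translation S⁺ := T − P. Then for all x, y in M one has 6·Y(x;y) = [S⁺_x, S⁺_y] + S⁺_{[x,y]}. -/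
/-! Since `S⁺ = T - P = S + 2T` and `P = -(S + T)`, the Maurer–Cartan equations express
`S_{[x,y]}` and `T_{[x,y]}` through brackets, and with `[S_x,T_y] = [T_x,S_y]` both `6 Y(x;y)`
and `[S⁺_x,S⁺_y] + S⁺_{[x,y]}` reduce to `2 ([S_x,S_y] + [T_x,T_y] + [S_x,T_y])`. -/

structure IsMoufangMaltsevPair_s5 {R M L : Type*} [CommRing R] [AddCommGroup M] [Module R M]
    [LieRing L] [LieAlgebra R L] (br : M →ₗ[R] M →ₗ[R] M) (S T : M →ₗ[R] L) : Prop where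
  lie_S_S : ∀ x y, ⁅S x, S y⁆ = S (br x y) - 2 • ⁅S x, T y⁆
  lie_T_T : ∀ x y, ⁅T x, T y⁆ = T (br y x) - 2 • ⁅T x, S y⁆
  lie_S_T : ∀ x y, ⁅S x, T y⁆ = ⁅T x, S y⁆

theorem lie_add_lie_add_lie_neg_sub_neg_sub {L : Type*} [LieRing L] (a b c d : L) :
    ⁅a, b⁆ + ⁅c, d⁆ + ⁅-a - c, -b - d⁆ = 2 • (⁅a, b⁆ + ⁅c, d⁆) + ⁅a, d⁆ + ⁅c, b⁆ := by
  simp only [sub_lie, lie_sub, neg_lie, lie_neg]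
  abel

namespace IsMoufangMaltsevPair_s5

variable {R M L : Type*} [CommRing R] [AddCommGroup M] [Module R M] [LieRing L] [LieAlgebra R L]
  {br : M →ₗ[R] M →ₗ[R] M} {S T : M →ₗ[R] L}

theorem S_apply_br (h : IsMoufangMaltsevPair_s5 br S T) (x y : M) :
    S (br x y) = ⁅S x, S y⁆ + 2 • ⁅S x, T y⁆ := by
  rw [h.lie_S_S]
  abel

theorem T_apply_br (h : IsMoufangMaltsevPair_s5 br S T) (x y : M) :
    T (br x y) = -⁅T x, T y⁆ - 2 • ⁅S x, T y⁆ := by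
  have := h.lie_T_T y x
  rw [← lie_skew (T y) (T x), ← lie_skew (T y) (S x), eq_sub_iff_add_eq] at this
  rw [← this]
  abel

theorem lie_add_lie_add_lie_neg_sub (h : IsMoufangMaltsevPair_s5 br S T) (x y : M) :
    ⁅S x, S y⁆ + ⁅T x, T y⁆ + ⁅(-S - T) x, (-S - T) y⁆
      = 2 • (⁅S x, S y⁆ + ⁅T x, T y⁆ + ⁅S x, T y⁆) := by
  rw [LinearMap.sub_apply, LinearMap.sub_apply, LinearMap.neg_apply, LinearMap.neg_apply,
    lie_add_lie_add_lie_neg_sub_neg_sub, ← h.lie_S_T]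
  abel

theorem lie_add_apply_br_S_add_two_smul_T (h : IsMoufangMaltsevPair_s5 br S T) (x y : M) :
    ⁅(S + 2 • T) x, (S + 2 • T) y⁆ + (S + 2 • T) (br x y)
      = 2 • (⁅S x, S y⁆ + ⁅T x, T y⁆ + ⁅S x, T y⁆) := by
  simp only [LinearMap.add_apply, LinearMap.smul_apply, lie_add, add_lie, lie_nsmul, nsmul_lie,
    h.S_apply_br, h.T_apply_br, ← h.lie_S_T x y]
  abel

end IsMoufangMaltsevPair_s5

/-- For a Moufang–Mal'tsev pair (S, T), with P := -S - T,
Yamagutian Y, and S⁺ := T - P, one has 6·Y(x;y) = [S⁺x, S⁺y] + S⁺[x,y]. -/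
theorem stmt_5 {k : Type*} [Field k] [CharZero k]
    {M L : Type*} [AddCommGroup M] [Module k M] [LieRing L] [LieAlgebra k L]
    (br : M →ₗ[k] M →ₗ[k] M) (S T : M →ₗ[k] L)
    (hSS : ∀ x y : M, ⁅S x, S y⁆ = S (br x y) - 2 • ⁅S x, T y⁆)
    (hTT : ∀ x y : M, ⁅T x, T y⁆ = T (br y x) - 2 • ⁅T x, S y⁆)
    (hST : ∀ x y : M, ⁅S x, T y⁆ = ⁅T x, S y⁆)
    (P : M →ₗ[k] L) (hP : P = -S - T)
    (Y : M → M → L)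
    (hY : ∀ x y : M, Y x y = (1/6 : k) • (⁅S x, S y⁆ + ⁅T x, T y⁆ + ⁅P x, P y⁆))
    (Splus : M →ₗ[k] L) (hSplus : Splus = T - P) :
    ∀ x y : M, 6 • Y x y = ⁅Splus x, Splus y⁆ + Splus (br x y) := by
  intro x y
  have hpair : IsMoufangMaltsevPair_s5 br S T := ⟨hSS, hTT, hST⟩
  have hSplus' : Splus = S + 2 • T := by rw [hSplus, hP]; abel
  rw [hY, ← Nat.cast_smul_eq_nsmul k, smul_smul, hSplus', hP,
    hpair.lie_add_lie_add_lie_neg_sub, hpair.lie_add_apply_br_S_add_two_smul_T]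
  norm_num
end
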